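/- arXiv:math/9904125 — 3 statements merged into one kernel-verified Lean document; each statement's English description precedes it below -/
import Mathlib

section
/- Let G be a finitely generated residually finite group and let φ : G → G be a group endomorphism such that the image φ(G) has finite index in G. Then there exists a natural number n such that the restriction of φ to the subgroup φ^n(G) (the image of the n-th iterate of φ) is injective. -/
/-!
Write `Hₙ = φⁿ(G)`. As `φ` maps `Hₙ` onto `Hₙ₊₁` with kernel `K ⊓ Hₙ`, `K = ker φ`, we have
`[Hₙ : Hₙ₊₁] = [Hₙ : (Hₙ₊₁ ⊔ K) ⊓ Hₙ] · [Hₙ₊₁ : Hₙ₊₂]`. So the finite indices `[Hₙ : Hₙ₊₁]`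
decrease, hence stabilise from some `N` on, and from then on `K ⊓ Hₙ ≤ Hₙ₊₁`; thus `K ⊓ H_N`
lies in every `Hₙ`. It remains to see that `K ⊓ ⋂ₙ Hₙ = 1`. For finite `G` this is the same
index argument with `⊥` in place of `Hₙ₊₁`. In general, every finite-index subgroup of the
finitely generated group `G` contains a finite-index normal subgroup `M` with `φ(M) ≤ M`;
applying the finite case to the endomorphism induced on `G ⧸ M` puts `K ⊓ ⋂ₙ Hₙ` inside `M`,
and residual finiteness finishes the proof.
-/

namespace Subgroup

variable {G G' : Type*} [Group G] [Group G']

theorem relIndex_sup_ker_inf_mul_relIndex_map_map (f : G →* G') (A B : Subgroup G) :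
    B.relIndex ((B ⊔ f.ker) ⊓ A) * (B.map f).relIndex (A.map f) = B.relIndex A := by
  rw [← relIndex_comap, comap_map_eq, relIndex_inf_mul_relIndex, inf_sup_self]

theorem relIndex_map_map_le (f : G →* G') {A B : Subgroup G} (h : B.relIndex A ≠ 0) :
    (B.map f).relIndex (A.map f) ≤ B.relIndex A :=
  Nat.le_of_dvd (Nat.pos_of_ne_zero h)
    (Dvd.intro_left _ (relIndex_sup_ker_inf_mul_relIndex_map_map f A B))

theorem ker_inf_le_of_relIndex_map_map_eq (f : G →* G') {A B : Subgroup G}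
    (h₀ : B.relIndex A ≠ 0) (h : (B.map f).relIndex (A.map f) = B.relIndex A) :
    f.ker ⊓ A ≤ B := by
  have key := relIndex_sup_ker_inf_mul_relIndex_map_map f A B
  rw [h, mul_eq_right₀ h₀, relIndex_eq_one] at key
  exact le_trans (inf_le_inf_right A le_sup_right) key

theorem map_pow_succ (φ : Monoid.End G) (n : ℕ) (A : Subgroup G) :
    A.map (φ ^ (n + 1)) = (A.map (φ ^ n)).map φ := by
  rw [pow_succ']
  exact (map_map A _ _).symm

end Subgroup

namespace Monoid.End

open Subgroup

variable {G : Type*} [Group G] (φ : Monoid.End G)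

/-- The relative index of `φⁿ(B)` in `φⁿ(A)` is non-increasing in `n`, hence eventually
constant. -/
theorem exists_ker_inf_map_pow_le {A B : Subgroup G} (h : B.relIndex A ≠ 0) :
    ∃ N, ∀ n ≥ N, (φ : G →* G).ker ⊓ A.map (φ ^ n) ≤ B.map (φ ^ n) := by
  set a : ℕ → ℕ := fun n => (B.map (φ ^ n)).relIndex (A.map (φ ^ n)) with ha
  have ha_succ : ∀ n, a (n + 1) = ((B.map (φ ^ n)).map φ).relIndex ((A.map (φ ^ n)).map φ) :=
    fun n => by simp only [ha, map_pow_succ]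
  have ha_ne : ∀ n, a n ≠ 0 := by
    intro n
    induction n with
    | zero =>
      change (B.map (MonoidHom.id G)).relIndex (A.map (MonoidHom.id G)) ≠ 0
      rwa [map_id, map_id]
    | succ n ih =>
      rw [ha_succ]
      exact right_ne_zero_of_mul
        ((relIndex_sup_ker_inf_mul_relIndex_map_map φ _ _).trans_ne ih)
  have ha_anti : Antitone a := antitone_nat_of_succ_le fun n =>
    (ha_succ n).trans_le (relIndex_map_map_le φ (ha_ne n))
  obtain ⟨N, hN⟩ := WellFoundedLT.antitone_chain_condition ha_anti
  refine ⟨N, fun n hn => ker_inf_le_of_relIndex_map_map_eq φ (ha_ne n) ?_⟩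
  exact (ha_succ n).symm.trans ((hN (n + 1) (hn.trans n.le_succ)).symm.trans (hN n hn))

theorem range_pow_succ (n : ℕ) :
    MonoidHom.range (φ ^ (n + 1) : Monoid.End G) = (φ : G →* G).range.map (φ ^ n) := by
  rw [pow_succ]
  exact MonoidHom.range_comp _ _

theorem range_pow_antitone : Antitone fun n => MonoidHom.range (φ ^ n : Monoid.End G) :=
  antitone_nat_of_succ_le fun n => (φ.range_pow_succ n).trans_le (map_le_range _ _)

theorem ker_inf_range_pow_le_of_forall_ge {N : ℕ}
    (hN : ∀ n ≥ N, (φ : G →* G).ker ⊓ MonoidHom.range (φ ^ n : Monoid.End G) ≤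
      MonoidHom.range (φ ^ (n + 1) : Monoid.End G)) (m : ℕ) :
    (φ : G →* G).ker ⊓ MonoidHom.range (φ ^ N : Monoid.End G) ≤
      MonoidHom.range (φ ^ m : Monoid.End G) := by
  have h : ∀ k, (φ : G →* G).ker ⊓ MonoidHom.range (φ ^ N : Monoid.End G) ≤
      MonoidHom.range (φ ^ (N + k) : Monoid.End G) := by
    intro k
    induction k with
    | zero => exact inf_le_right
    | succ k ih => exact (le_inf inf_le_left ih).trans (hN (N + k) (N.le_add_right k))
  exact (h m).trans (φ.range_pow_antitone (m.le_add_left N))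

theorem ker_inf_iInf_range_pow_eq_bot_of_finite [Finite G] :
    (φ : G →* G).ker ⊓ ⨅ n, MonoidHom.range (φ ^ n : Monoid.End G) = ⊥ := by
  obtain ⟨N, hN⟩ := φ.exists_ker_inf_map_pow_le (A := ⊤) (B := ⊥)
    (by rw [relIndex_bot_left]; exact Nat.card_pos.ne')
  refine eq_bot_iff.2 ((inf_le_inf_left _ (iInf_le _ N)).trans ?_)
  have h := hN N le_rfl
  rw [← MonoidHom.range_eq_map, Subgroup.map_bot] at h
  exact h

theorem ker_inf_iInf_range_pow_le_of_le_comap {M : Subgroup G} [M.Normal] [M.FiniteIndex]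
    (hM : M ≤ M.comap φ) :
    (φ : G →* G).ker ⊓ ⨅ n, MonoidHom.range (φ ^ n : Monoid.End G) ≤ M := by
  let ψ : Monoid.End (G ⧸ M) := QuotientGroup.map M M φ hM
  have hψ (n : ℕ) (x : G) : (ψ ^ n) (x : G ⧸ M) = ((φ ^ n) x : G) := by
    simp only [Monoid.End.coe_pow]
    exact (Function.Semiconj.iterate_right (f := ((↑) : G → G ⧸ M)) (ga := φ) (gb := ψ)
      (fun _ => rfl) n x).symm
  rintro x ⟨hx_ker, hx_range⟩
  rw [← QuotientGroup.eq_one_iff]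
  have hx : (x : G ⧸ M) ∈
      (ψ : G ⧸ M →* G ⧸ M).ker ⊓ ⨅ n, MonoidHom.range (ψ ^ n : Monoid.End _) := by
    refine ⟨?_, mem_iInf.2 fun n => ?_⟩
    · exact congrArg ((↑) : G → G ⧸ M) hx_ker
    · obtain ⟨y, rfl⟩ := mem_iInf.1 hx_range n
      exact ⟨y, hψ n y⟩
  rwa [ψ.ker_inf_iInf_range_pow_eq_bot_of_finite] at hx

end Monoid.End

theorem Group.FG.finite_monoidHom (G F : Type*) [Group G] [Group.FG G] [Group F] [Finite F] :
    Finite (G →* F) := by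
  obtain ⟨S, hS, hfin⟩ := Group.fg_iff.mp ‹Group.FG G›
  have := hfin.to_subtype
  refine Finite.of_injective (fun f : G →* F => fun s : S => f s) fun f g h => ?_
  exact MonoidHom.eq_of_eqOn_dense hS fun x hx => congrFun h ⟨x, hx⟩

/-- Take the intersection of the kernels of the finitely many homomorphisms
`G →* Equiv.Perm (G ⧸ H)`: precomposing with an endomorphism permutes this family. -/
theorem Subgroup.exists_normal_finiteIndex_le_forall_le_comap {G : Type*} [Group G] [Group.FG G]
    (H : Subgroup G) [H.FiniteIndex] :
    ∃ M : Subgroup G, M.Normal ∧ M.FiniteIndex ∧ M ≤ H ∧ ∀ f : G →* G, M ≤ M.comap f := by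
  have := Group.FG.finite_monoidHom G (Equiv.Perm (G ⧸ H))
  refine ⟨⨅ f : G →* Equiv.Perm (G ⧸ H), f.ker, normal_iInf_normal fun f => f.normal_ker,
    finiteIndex_iInf fun f => finiteIndex_ker f, ?_, fun f x hx => ?_⟩
  · exact (iInf_le _ (MulAction.toPermHom G (G ⧸ H))).trans
      (H.normalCore_eq_ker ▸ H.normalCore_le)
  · exact mem_comap.2 (mem_iInf.2 fun g => mem_iInf.1 hx (g.comp f))

theorem Monoid.End.ker_inf_iInf_range_pow_eq_bot {G : Type*} [Group G] [Group.FG G]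
    [Group.ResiduallyFinite G] (φ : Monoid.End G) :
    (φ : G →* G).ker ⊓ ⨅ n, MonoidHom.range (φ ^ n : Monoid.End G) = ⊥ := by
  refine eq_bot_iff.2 fun x hx => Subgroup.mem_bot.2 <|
    Group.residuallyFinite_iff_forall_finiteIndex.1 ‹_› x fun H _ => ?_
  obtain ⟨M, _, _, hMH, hM_comap⟩ := H.exists_normal_finiteIndex_le_forall_le_comap
  exact hMH (φ.ker_inf_iInf_range_pow_le_of_le_comap (hM_comap φ) hx)

/-- **Hirshon's theorem.** If `G` is a finitely generated residually finite group
and `φ : G → G` is an endomorphism whose image has finite index in `G`, then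
there is an `n` such that `φ` is injective on the subgroup `φ^n(G)`. -/
theorem exists_injOn_iterate_range
    (G : Type*) [Group G] [Group.FG G]
    (hres : ∀ x : G, x ≠ 1 → ∃ N : Subgroup G, N.Normal ∧ N.FiniteIndex ∧ x ∉ N)
    (φ : Monoid.End G) (hφ : (φ : G →* G).range.FiniteIndex) :
    ∃ n : ℕ, Set.InjOn φ (((φ ^ n : Monoid.End G) : G →* G).range : Set G) := by
  have : Group.ResiduallyFinite G := Group.residuallyFinite_iff_exists_finiteIndex.2 fun x hx =>
    let ⟨N, _, hN, hxN⟩ := hres x hx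
    ⟨N, hN, hxN⟩
  obtain ⟨N, hN⟩ := φ.exists_ker_inf_map_pow_le (A := ⊤) (B := (φ : G →* G).range)
    (by rwa [Subgroup.relIndex_top_right, ← Subgroup.finiteIndex_iff])
  have hstable (n : ℕ) (hn : n ≥ N) : (φ : G →* G).ker ⊓ MonoidHom.range (φ ^ n : Monoid.End G) ≤
      MonoidHom.range (φ ^ (n + 1) : Monoid.End G) := by
    rw [φ.range_pow_succ, MonoidHom.range_eq_map (φ ^ n : Monoid.End G)]
    exact hN n hn
  refine ⟨N, (Set.injOn_iff_map_eq_one φ _).2 fun x hx hφx => ?_⟩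
  have hx_mem : x ∈ (φ : G →* G).ker ⊓ ⨅ n, MonoidHom.range (φ ^ n : Monoid.End G) :=
    ⟨hφx, Subgroup.mem_iInf.2 fun m => φ.ker_inf_range_pow_le_of_forall_ge hstable m ⟨hφx, hx⟩⟩
  rwa [φ.ker_inf_iInf_range_pow_eq_bot] at hx_mem
end

section
/- Let G be a group, let H be a normal subgroup of G whose centralizer in G is trivial, let α be an automorphism of G, and let φ : G → G be an endomorphism such that φ(h) = α(h) for every h in H. Then φ = α; in particular φ is an automorphism of G. -/
/-- If `H` is a normal subgroup of `G` with trivial centralizer, `α` is an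
automorphism of `G`, and `φ` is an endomorphism of `G` agreeing with `α` on `H`,
then `φ = α`; in particular `φ` is an automorphism. -/
theorem endomorphism_eq_automorphism_of_agree_on_normal_trivial_centralizer
    (G : Type*) [Group G] (H : Subgroup G) (hN : H.Normal)
    (hC : Subgroup.centralizer (H : Set G) = ⊥)
    (α : G ≃* G) (φ : G →* G) (hφ : ∀ h ∈ H, φ h = α h) :
    (∀ x : G, φ x = α x) ∧ Function.Bijective φ := by
  have key : ∀ x : G, φ x = α x := by
    intro g
    -- consider ψ = α⁻¹ ∘ φ; show g⁻¹ * ψ g centralizes H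
    set c : G := g⁻¹ * (α.symm (φ g)) with hc
    have hcent : c ∈ Subgroup.centralizer (H : Set G) := by
      rw [Subgroup.mem_centralizer_iff]
      intro h hh
      have h1 : φ (g * h * g⁻¹) = α (g * h * g⁻¹) := hφ _ (hN.conj_mem h hh g)
      have h2 : φ h = α h := hφ h hh
      have h3 : α.symm (φ g) * h * (α.symm (φ g))⁻¹ = g * h * g⁻¹ := by
        have := congrArg α.symm h1
        simp only [map_mul, map_inv, MulEquiv.symm_apply_apply] at this
        rw [h2] at this
        simpa using this
      have h4 : c * h * c⁻¹ = h := by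
        rw [hc]
        have : g⁻¹ * (α.symm (φ g) * h * (α.symm (φ g))⁻¹) * g = g⁻¹ * (g * h * g⁻¹) * g := by
          rw [h3]
        simpa [mul_assoc] using this
      calc h * c = c * (c⁻¹ * h * c) := by group
        _ = c * h := by
            congr 1
            have := congrArg (fun x => c⁻¹ * x * c) h4
            simpa [mul_assoc] using this.symm
    have : c = 1 := by rw [hC] at hcent; simpa using hcent
    have hg : α.symm (φ g) = g := by
      have := mul_eq_one_iff_eq_inv.mp this
      simpa using this.symm
    calc φ g = α (α.symm (φ g)) := by simp
    _ = α g := by rw [hg]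
  refine ⟨key, ?_⟩
  have : (φ : G → G) = α := funext key
  rw [show (φ : G → G) = ⇑α from funext key]
  exact α.bijective
end

section
/- Let G be a finitely generated residually finite group satisfying the following two conditions: (i) every isomorphism between two finite index subgroups of G is the restriction of an automorphism of G; (ii) every finite index subgroup of G contains a subgroup H that is normal in G and whose centralizer in G is trivial. Then every endomorphism φ of G such that φ(G) has finite index in G is an automorphism of G. -/
private def iterHom {G : Type*} [Group G] (φ : G →* G) : ℕ → G →* G
  | 0 => MonoidHom.id G
  | n + 1 => φ.comp (iterHom φ n)

private lemma iterHom_succ_apply {G : Type*} [Group G] (φ : G →* G) (n : ℕ) (x : G) :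
    iterHom φ (n + 1) x = φ (iterHom φ n x) := rfl

private lemma iterHom_succ' {G : Type*} [Group G] (φ : G →* G) (n : ℕ) (x : G) :
    iterHom φ (n + 1) x = iterHom φ n (φ x) := by
  induction n with
  | zero => rfl
  | succ n ih =>
      show φ (iterHom φ (n + 1) x) = φ (iterHom φ n (φ x))
      rw [ih]

private lemma iterHom_add {G : Type*} [Group G] (φ : G →* G) (a b : ℕ) (x : G) :
    iterHom φ (a + b) x = iterHom φ a (iterHom φ b x) := by
  induction a with
  | zero => rw [Nat.zero_add]; rfl
  | succ a ih =>
      have h : a + 1 + b = (a + b) + 1 := by omega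
      rw [h, iterHom_succ_apply, ih, iterHom_succ_apply]

/-- Abstract form of the paper's main theorem. Let `G` be a finitely generated
residually finite group such that (i) every isomorphism between two finite index
subgroups of `G` extends to an automorphism of `G`, and (ii) every finite index
subgroup of `G` contains a normal subgroup of `G` with trivial centralizer. Then
every endomorphism of `G` with finite index image is an automorphism. -/
theorem endomorphism_finiteIndex_range_bijective_of_rigid
    (G : Type*) [Group G] [Group.FG G]
    (hres : ∀ x : G, x ≠ 1 → ∃ N : Subgroup G, N.Normal ∧ N.FiniteIndex ∧ x ∉ N)
    (hrigid : ∀ (K L : Subgroup G), K.FiniteIndex → L.FiniteIndex →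
      ∀ e : K ≃* L, ∃ α : G ≃* G, ∀ x : K, α (x : G) = (e x : G))
    (hcent : ∀ K : Subgroup G, K.FiniteIndex →
      ∃ H : Subgroup G, H ≤ K ∧ H.Normal ∧ Subgroup.centralizer (H : Set G) = ⊥)
    (φ : G →* G) (hφ : φ.range.FiniteIndex) :
    Function.Bijective φ := by
  classical
  -- the tower of iterated images
  let K : ℕ → Subgroup G := fun m => (iterHom φ m).range
  have hKle : ∀ m, K (m + 1) ≤ K m := by
    rintro m x ⟨y, hy⟩
    exact ⟨φ y, by rw [← iterHom_succ']; exact hy⟩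
  -- each iterated image has finite index
  have hKfin : ∀ m, (K m).index ≠ 0 := by
    intro m
    induction m with
    | zero =>
        have h0 : K 0 = ⊤ := by
          rw [Subgroup.eq_top_iff']
          intro x; exact ⟨x, rfl⟩
        rw [h0, Subgroup.index_top]; exact one_ne_zero
    | succ n ih =>
        have hmap : K (n + 1) = (K n).map φ := by
          ext x
          constructor
          · rintro ⟨y, hy⟩
            exact Subgroup.mem_map.mpr ⟨iterHom φ n y, ⟨y, rfl⟩,
              by rw [← iterHom_succ_apply]; exact hy⟩
          · rintro hx
            obtain ⟨z, ⟨y, hy⟩, hzx⟩ := Subgroup.mem_map.mp hx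
            exact ⟨y, by rw [iterHom_succ_apply, hy, hzx]⟩
        rw [hmap, Subgroup.index_map]
        apply mul_ne_zero
        · intro h0
          exact ih (zero_dvd_iff.mp (h0 ▸ Subgroup.index_dvd_of_le
            (le_sup_left : K n ≤ K n ⊔ φ.ker)))
        · exact hφ.index_ne_zero
  -- the preimage tower
  let V : ℕ → Subgroup G := fun m => (K (m + 1)).comap (iterHom φ m)
  have hVindex : ∀ m, (V m).index = (K (m + 1)).relIndex (K m) := fun m =>
    Subgroup.index_comap (K (m + 1)) (iterHom φ m)
  have hVfin : ∀ m, (V m).index ≠ 0 := by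
    intro m h0
    have hrel := Subgroup.relIndex_mul_index (hKle m)
    rw [hVindex m] at h0
    exact hKfin (m + 1) (by rw [← hrel, h0, zero_mul])
  have hVle : ∀ m, V m ≤ V (m + 1) := by
    intro m x hx
    obtain ⟨y, hy⟩ := Subgroup.mem_comap.mp hx
    refine Subgroup.mem_comap.mpr ⟨y, ?_⟩
    rw [iterHom_succ_apply φ (m + 1) y, hy, ← iterHom_succ_apply]
  have hVmono : ∀ {m n : ℕ}, m ≤ n → V m ≤ V n := by
    intro m n h
    induction h with
    | refl => exact le_rfl
    | step _ ih => exact ih.trans (hVle _)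
  have hVanti : ∀ {m n : ℕ}, m ≤ n → (V n).index ≤ (V m).index := fun {m n} h =>
    Nat.le_of_dvd (Nat.pos_of_ne_zero (hVfin m)) (Subgroup.index_dvd_of_le (hVmono h))
  -- stabilization of the preimage tower
  obtain ⟨m₀, hm₀⟩ : ∃ m₀, ∀ m, m₀ ≤ m → V m = V m₀ := by
    have hne : (Set.range fun m => (V m).index).Nonempty := ⟨(V 0).index, 0, rfl⟩
    obtain ⟨m₀, hm₀⟩ := Nat.sInf_mem hne
    refine ⟨m₀, fun m hm => ?_⟩
    have h1 : (V m).index ≤ (V m₀).index := hVanti hm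
    have h2 : (V m₀).index ≤ (V m).index := hm₀.le.trans (Nat.sInf_le ⟨m, rfl⟩)
    have hle : V m₀ ≤ V m := hVmono hm
    have hidx : (V m₀).index = (V m).index := le_antisymm h2 h1
    have hrel := Subgroup.relIndex_mul_index hle
    have hone : (V m₀).relIndex (V m) = 1 := by
      have hmul : (V m₀).relIndex (V m) * (V m).index = 1 * (V m).index := by
        rw [one_mul, hrel, hidx]
      exact Nat.eq_of_mul_eq_mul_right (Nat.pos_of_ne_zero (hVfin m)) hmul
    exact le_antisymm (Subgroup.relIndex_eq_one.mp hone) hle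
  -- kernel elements in K (m₀+1) lie in all deeper images
  have hKstep : ∀ u : G, φ u = 1 → u ∈ K (m₀ + 1) → ∀ j, u ∈ K (m₀ + 1 + j) := by
    intro u hu hbase j
    induction j with
    | zero => exact hbase
    | succ j ih =>
        obtain ⟨x, hx⟩ := ih
        have hxV : x ∈ V (m₀ + 1 + j + 1) := by
          refine Subgroup.mem_comap.mpr ?_
          have h1 : iterHom φ (m₀ + 1 + j + 1) x = 1 := by
            rw [iterHom_succ_apply, hx, hu]
          rw [h1]; exact one_mem _
        have hVeq : V (m₀ + 1 + j + 1) = V (m₀ + 1 + j) := by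
          rw [hm₀ (m₀ + 1 + j + 1) (by omega), hm₀ (m₀ + 1 + j) (by omega)]
        rw [hVeq] at hxV
        exact hx ▸ Subgroup.mem_comap.mp hxV
  -- kernel elements in K (m₀+1) are trivial
  have hDtriv : ∀ u : G, φ u = 1 → u ∈ K (m₀ + 1) → u = 1 := by
    intro u hu hbase
    by_contra hne
    obtain ⟨N, hNnorm, hNfin, hNu⟩ := hres u hne
    haveI := hNnorm
    haveI := hNfin
    obtain ⟨S, hSclos, hSfin⟩ := Group.fg_iff.mp (inferInstance : Group.FG G)
    haveI := hSfin.to_subtype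
    have hfinHom : Finite (G →* G ⧸ N) := by
      apply Finite.of_injective (fun f : G →* G ⧸ N => (fun s : S => f s))
      intro f g hfg
      ext x
      have hx : x ∈ Subgroup.closure S := hSclos ▸ Subgroup.mem_top x
      induction hx using Subgroup.closure_induction with
      | mem y hy => exact congrFun hfg ⟨y, hy⟩
      | one => simp
      | mul a b ha hb iha ihb => simp [map_mul, iha, ihb]
      | inv a ha iha => simp [map_inv, iha]
    have key : ∀ a b : ℕ, a < b →
        (QuotientGroup.mk' N).comp (iterHom φ (m₀ + 1 + a)) =
          (QuotientGroup.mk' N).comp (iterHom φ (m₀ + 1 + b)) → False := by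
      intro a b hab heq
      obtain ⟨x, hx⟩ := hKstep u hu hbase a
      have h1 : QuotientGroup.mk' N (iterHom φ (m₀ + 1 + a) x)
          = QuotientGroup.mk' N (iterHom φ (m₀ + 1 + b) x) := by
        have := DFunLike.congr_fun heq x
        simpa using this
      have h2 : iterHom φ (m₀ + 1 + b) x = 1 := by
        have hb : m₀ + 1 + b = (b - a) + (m₀ + 1 + a) := by omega
        rw [hb, iterHom_add, hx]
        obtain ⟨k, hk⟩ : ∃ k, b - a = k + 1 := ⟨b - a - 1, by omega⟩
        rw [hk, iterHom_succ', hu]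
        exact map_one _
      rw [hx, h2, map_one] at h1
      exact hNu ((QuotientGroup.eq_one_iff u).mp h1)
    obtain ⟨j, j', hjne, hjeq⟩ := Finite.exists_ne_map_eq_of_infinite
      (fun j : ℕ => (QuotientGroup.mk' N).comp (iterHom φ (m₀ + 1 + j)))
    rcases Nat.lt_or_ge j j' with h | h
    · exact key j j' h hjeq
    · exact key j' j (by omega) hjeq.symm
  -- injectivity via the centralizer condition
  obtain ⟨H, hHle, hHnorm, hHcent⟩ := hcent (K (m₀ + 1)) ⟨hKfin (m₀ + 1)⟩
  have hinj : Function.Injective φ := by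
    apply (injective_iff_map_eq_one φ).mpr
    intro d hd
    have hdC : d ∈ Subgroup.centralizer (H : Set G) := by
      rw [Subgroup.mem_centralizer_iff]
      intro h hh
      have huH : d * h * d⁻¹ * h⁻¹ ∈ H := mul_mem (hHnorm.conj_mem h hh d) (inv_mem hh)
      have hu1 : φ (d * h * d⁻¹ * h⁻¹) = 1 := by simp [map_mul, map_inv, hd]
      have h1 : d * h * d⁻¹ * h⁻¹ = 1 := hDtriv _ hu1 (hHle huH)
      have h2 : d * h * d⁻¹ = h := by
        have := mul_inv_eq_one.mp h1
        exact this
      exact (mul_inv_eq_iff_eq_mul.mp h2).symm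
    rw [hHcent] at hdC
    exact Subgroup.mem_bot.mp hdC
  -- surjectivity via rigidity
  have hψmem : ∀ x : (⊤ : Subgroup G), φ ((Subgroup.subtype ⊤) x) ∈ φ.range :=
    fun x => ⟨(x : G), rfl⟩
  set ψ : (⊤ : Subgroup G) →* φ.range :=
    (φ.comp (Subgroup.subtype ⊤)).codRestrict φ.range hψmem with hψdef
  have hψbij : Function.Bijective ψ := by
    constructor
    · intro a b hab
      apply Subtype.ext
      apply hinj
      exact congrArg Subtype.val hab
    · rintro ⟨y, x, hx⟩
      exact ⟨⟨x, Subgroup.mem_top x⟩, Subtype.ext hx⟩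
  obtain ⟨α, hα⟩ := hrigid ⊤ φ.range inferInstance hφ (MulEquiv.ofBijective ψ hψbij)
  have hαφ : ∀ x : G, α x = φ x := by
    intro x
    have := hα ⟨x, Subgroup.mem_top x⟩
    simpa [hψdef] using this
  refine ⟨hinj, fun y => ⟨α.symm y, ?_⟩⟩
  rw [← hαφ, MulEquiv.apply_symm_apply]
end
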